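/- Let S ⊆ Q₀ be the set of source vertices of Q (vertices that are the target of no arrow). For every monic representation X ∈ Mon(Q,A) there is a short exact sequence 0 → ⊕_{i∈S} m_i(X_i) → X → Z → 0 in Rep(Q,A), where the morphism into X is given at each vertex j by the maps X_p over all paths p starting at a source vertex and ending at j, such that the cokernel Z is again a monic representation and moreover Z_i = 0 for every source vertex i ∈ S. -/

import Mathlib

open CategoryTheory Limits

variable (A : Type) [Ring A]
variable (V : Type) [Quiver.{0} V] [Fintype V] [∀ i j : V, Fintype (i ⟶ j)]
  [∀ i j : V, Fintype (Quiver.Path i j)]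

/-- The category `Rep(Q,A)` of representations of the quiver `Q` over `A`. -/
abbrev QRep := Paths V ⥤ ModuleCat.{0} A

/-- The canonical map `δ_i(X) : ⊕_{α : e(α) = i} X_{s(α)} → X_i`. -/
noncomputable def deltaMap (X : QRep A V) (i : V) :
    (∀ a : (Σ j : V, j ⟶ i), X.obj ((Paths.of V).obj a.1)) →ₗ[A] X.obj ((Paths.of V).obj i) where
  toFun v := ∑ a : (Σ j : V, j ⟶ i), X.map a.2.toPath (v a)
  map_add' u v := by
    simp only [Pi.add_apply]
    exact (Finset.sum_congr rfl fun a _ => map_add _ (u a) (v a)).trans Finset.sum_add_distrib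
  map_smul' c v := by
    simp only [Pi.smul_apply, RingHom.id_apply]
    exact (Finset.sum_congr rfl fun a _ => map_smul _ c (v a)).trans Finset.smul_sum.symm

/-- A representation is monic if each `δ_i(X)` is injective. -/
def IsMonicRep (X : QRep A V) : Prop :=
  ∀ i : V, Function.Injective (deltaMap A V X i)

/-- A representation is finite-dimensional if each branch is a finite `A`-module. -/
def IsFinRep (X : QRep A V) : Prop :=
  ∀ i : V, Module.Finite A (X.obj ((Paths.of V).obj i))

/-- The monomorphism category `Mon(Q,A)`: finite-dimensional monic representations. -/
abbrev MonRep := ObjectProperty.FullSubcategory (fun X : QRep A V => IsMonicRep A V X ∧ IsFinRep A V X)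

/-- `m_i(M) = P(i) ⊗_k M`. -/
noncomputable def mObj (i : V) (M : ModuleCat.{0} A) : QRep A V where
  obj j := ModuleCat.of A (((Paths.of V).obj i ⟶ j) →₀ M)
  map {j l} q := ModuleCat.ofHom (Finsupp.lmapDomain M A (fun p => p ≫ q))
  map_id j := by
    have h : (fun p : (Paths.of V).obj i ⟶ j => p ≫ 𝟙 j) = id := by
      funext p; simp
    show ModuleCat.ofHom (Finsupp.lmapDomain (↑M) A (fun p : (Paths.of V).obj i ⟶ j => p ≫ 𝟙 j)) = _
    rw [h, Finsupp.lmapDomain_id]; rfl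
  map_comp {j l r} q q' := by
    have h : (fun p : (Paths.of V).obj i ⟶ j => p ≫ (q ≫ q'))
        = (fun p' : (Paths.of V).obj i ⟶ l => p' ≫ q') ∘ (fun p => p ≫ q) := by
      funext p; simp
    show ModuleCat.ofHom (Finsupp.lmapDomain (↑M) A (fun p : (Paths.of V).obj i ⟶ j => p ≫ (q ≫ q'))) = _
    rw [h, Finsupp.lmapDomain_comp]; rfl

/-- The functor `m_i : A-mod → Rep(Q,A)`, `M ↦ P(i) ⊗_k M`. -/
noncomputable def mFunctor (i : V) : ModuleCat.{0} A ⥤ QRep A V where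
  obj M := mObj A V i M
  map {M N} φ :=
    { app := fun j => ModuleCat.ofHom (Finsupp.mapRange.linearMap (α := ((Paths.of V).obj i ⟶ j)) φ.hom)
      naturality := fun j l q => by
        apply ModuleCat.hom_ext
        apply Finsupp.lhom_ext
        intro p m
        show Finsupp.mapRange.linearMap φ.hom (Finsupp.mapDomain (fun p' => p' ≫ q) (Finsupp.single p m))
          = Finsupp.mapDomain (fun p' => p' ≫ q) (Finsupp.mapRange.linearMap φ.hom (Finsupp.single p m))
        simp [Finsupp.mapDomain_single] }
  map_id M := by
    apply NatTrans.ext; funext j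
    apply ModuleCat.hom_ext
    apply Finsupp.lhom_ext; intro p m
    show Finsupp.mapRange.linearMap (𝟙 M : M ⟶ M).hom (Finsupp.single p m) = Finsupp.single p m
    simp [Finsupp.mapRange_single]
  map_comp {M N P} φ ψ := by
    apply NatTrans.ext; funext j
    apply ModuleCat.hom_ext
    apply Finsupp.lhom_ext; intro p m
    show Finsupp.mapRange.linearMap (φ ≫ ψ).hom (Finsupp.single p m)
      = Finsupp.mapRange.linearMap ψ.hom (Finsupp.mapRange.linearMap φ.hom (Finsupp.single p m))
    simp [Finsupp.mapRange_single]

/-- The canonical morphism `m_i(X_i) ⟶ X`, given at each vertex `j` by the maps `X_p`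
over paths `p : i → j`. -/
noncomputable def counitHom (i : V) (X : QRep A V) :
    mObj A V i (X.obj ((Paths.of V).obj i)) ⟶ X where
  app j := ModuleCat.ofHom (Finsupp.lsum ℕ (fun p : (Paths.of V).obj i ⟶ j => (X.map p).hom))
  naturality j l q := by
    apply ModuleCat.hom_ext
    apply Finsupp.lhom_ext
    intro p m
    show Finsupp.lsum ℕ (fun p' : (Paths.of V).obj i ⟶ l => (X.map p').hom)
      (Finsupp.mapDomain (fun p' => p' ≫ q) (Finsupp.single p m)) = X.map q (Finsupp.lsum ℕ _ (Finsupp.single p m))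
    simp [Finsupp.mapDomain_single, Finsupp.lsum_single]

/-- The cokernel of `δ_i(X)`, i.e. `Cok_i(X)`. -/
noncomputable def cokerObj (X : QRep A V) (i : V) : ModuleCat.{0} A :=
  ModuleCat.of A (X.obj ((Paths.of V).obj i) ⧸ LinearMap.range (deltaMap A V X i))

instance : HasFiniteBiproducts (QRep A V) := HasFiniteBiproducts.of_hasFiniteProducts
instance : HasFiniteBiproducts (ModuleCat.{0} A) := HasFiniteBiproducts.of_hasFiniteProducts


/-!
A path from a source to a vertex `j` is either trivial, and then `j` is itself a source, or it
ends with an arrow `α : l → j`. Hence the path-sum map `∏_{p : s ⇝ j, s source} X_s → X_j` is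
the identity at a source and otherwise factors as `δ_j` after the product of the path-sum maps at
the tails `l`. Since the quiver has finitely many paths, induction on the length of the longest
path into `j` shows that the path-sum map is injective when `X` is monic. The same factorisation,
together with the injectivity of `δ_j`, shows that a family `x` with `δ_j x` in the image of the
path-sum map lies in that image componentwise, which is exactly what makes the cokernel monic.
-/

section
variable {A V}
open scoped Classical

lemma biproduct_app_eq_sum {C J : Type} [Category C] [Fintype J] (F : J → C ⥤ ModuleCat.{0} A)
    [HasBiproduct F] (c : C) (x : (⨁ F).obj c) :
    x = ∑ s, (biproduct.ι F s).app c ((biproduct.π F s).app c x) := by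
  have h := congrArg (fun η : (⨁ F) ⟶ (⨁ F) => η.app c x) (biproduct.total (f := F))
  simp only [NatTrans.app_sum] at h
  change ModuleCat.Hom.hom _ x = _ at h
  rw [ModuleCat.hom_sum, LinearMap.sum_apply] at h
  exact h.symm

abbrev IsSource (i : V) : Prop := ∀ j : V, IsEmpty (j ⟶ i)

noncomputable def pathHeight (j : V) : ℕ :=
  Finset.univ.sup fun a : Σ i : V, Quiver.Path i j => a.2.length

omit [∀ i j : V, Fintype (i ⟶ j)] in
lemma pathHeight_lt_of_arrow {l j : V} (α : l ⟶ j) : pathHeight l < pathHeight j := by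
  have h : ∀ a : Σ i : V, Quiver.Path i l, a.2.length < pathHeight j := fun a =>
    (Finset.le_sup (f := fun a : Σ i : V, Quiver.Path i j => a.2.length)
      (Finset.mem_univ ⟨a.1, a.2.cons α⟩)).trans_lt' (by simp)
  exact (Finset.sup_lt_iff ((Nat.zero_le _).trans_lt (h ⟨l, .nil⟩))).2 fun a _ => h a

omit [Fintype V] [∀ i j : V, Fintype (i ⟶ j)] in
instance (i j : V) : Fintype ((Paths.of V).obj i ⟶ (Paths.of V).obj j) :=
  inferInstanceAs (Fintype (Quiver.Path i j))

abbrev SourceVertex (V : Type) [Quiver.{0} V] := {i : V // IsSource i}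

abbrev SourcePath (j : V) := Σ s : SourceVertex V, (Paths.of V).obj s.1 ⟶ (Paths.of V).obj j

omit [Fintype V] [∀ i j : V, Fintype (i ⟶ j)] [∀ i j : V, Fintype (Quiver.Path i j)] in
lemma SourcePath.eq_id {j : V} (hj : IsSource j) (a : SourcePath j) : a = ⟨⟨j, hj⟩, 𝟙 _⟩ := by
  obtain ⟨s, _ | ⟨_, α⟩⟩ := a
  · rfl
  · exact (hj _).elim α

def SourcePath.uncons {j : V} (s : SourceVertex V) :
    Quiver.Path s.1 j → ¬ IsSource j → Σ b : Σ l : V, l ⟶ j, SourcePath b.1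
  | .nil, hj => absurd s.2 hj
  | .cons p α, _ => ⟨⟨_, α⟩, s, p⟩

def SourcePath.consEquiv (j : V) (hj : ¬ IsSource j) :
    (Σ b : Σ l : V, l ⟶ j, SourcePath b.1) ≃ SourcePath j where
  toFun c := ⟨c.2.1, c.2.2 ≫ (Paths.of V).map c.1.2⟩
  invFun a := uncons a.1 a.2 hj
  left_inv := by rintro ⟨⟨l, α⟩, s, p⟩; rfl
  right_inv := by
    rintro ⟨s, _ | ⟨p, α⟩⟩
    · exact absurd s.2 hj
    · rfl

omit [∀ i j : V, Fintype (Quiver.Path i j)] in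
lemma deltaMap_apply (X : QRep A V) (i : V)
    (v : ∀ a : (Σ j : V, j ⟶ i), X.obj ((Paths.of V).obj a.1)) :
    deltaMap A V X i v = ∑ a : (Σ j : V, j ⟶ i), X.map ((Paths.of V).map a.2) (v a) := rfl

omit [∀ i j : V, Fintype (Quiver.Path i j)] in
lemma deltaMap_naturality {X Y : QRep A V} (f : X ⟶ Y) (i : V)
    (x : ∀ b : Σ l : V, l ⟶ i, X.obj ((Paths.of V).obj b.1)) :
    deltaMap A V Y i (fun b => f.app _ (x b)) = f.app _ (deltaMap A V X i x) := by
  rw [deltaMap_apply, deltaMap_apply, map_sum]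
  refine Finset.sum_congr rfl fun b _ => ?_
  exact congrArg (fun g => g.hom (x b)) (f.naturality ((Paths.of V).map b.2)).symm

noncomputable def pathSum (X : QRep A V) (j : V) :
    (∀ a : SourcePath j, X.obj ((Paths.of V).obj a.1.1)) →ₗ[A] X.obj ((Paths.of V).obj j) :=
  ∑ a : SourcePath j, (X.map a.2).hom ∘ₗ LinearMap.proj a

omit [∀ i j : V, Fintype (i ⟶ j)] in
lemma pathSum_apply (X : QRep A V) (j : V)
    (v : ∀ a : SourcePath j, X.obj ((Paths.of V).obj a.1.1)) :
    pathSum X j v = ∑ a : SourcePath j, X.map a.2 (v a) := by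
  simp only [pathSum, LinearMap.sum_apply]
  rfl

omit [∀ i j : V, Fintype (i ⟶ j)] in
lemma pathSum_of_isSource (X : QRep A V) {j : V} (hj : IsSource j)
    (v : ∀ a : SourcePath j, X.obj ((Paths.of V).obj a.1.1)) :
    pathSum X j v = v ⟨⟨j, hj⟩, 𝟙 _⟩ := by
  rw [pathSum_apply, Fintype.sum_eq_single _ fun a ha => (ha (a.eq_id hj)).elim]
  show X.map (𝟙 ((Paths.of V).obj j)) _ = _
  simp

omit [∀ i j : V, Fintype (i ⟶ j)] in
lemma pathSum_surjective_of_isSource (X : QRep A V) {j : V} (hj : IsSource j) :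
    Function.Surjective (pathSum X j) := fun y =>
  ⟨Pi.single (M := fun a : SourcePath j => X.obj ((Paths.of V).obj a.1.1)) ⟨⟨j, hj⟩, 𝟙 _⟩ y,
    by rw [pathSum_of_isSource X hj, Pi.single_eq_same]⟩

lemma pathSum_eq_deltaMap (X : QRep A V) {j : V} (hj : ¬ IsSource j)
    (v : ∀ a : SourcePath j, X.obj ((Paths.of V).obj a.1.1)) :
    pathSum X j v =
      deltaMap A V X j fun b => pathSum X b.1 fun a => v ⟨a.1, a.2 ≫ (Paths.of V).map b.2⟩ := by
  rw [pathSum_apply, deltaMap_apply, ← (SourcePath.consEquiv j hj).sum_comp, Fintype.sum_sigma]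
  refine Finset.sum_congr rfl fun b _ => ?_
  rw [pathSum_apply, map_sum]
  refine Finset.sum_congr rfl fun a _ => ?_
  show X.map (a.2 ≫ (Paths.of V).map b.2) _ = _
  rw [Functor.map_comp]
  rfl

lemma pathSum_injective {X : QRep A V} (hX : IsMonicRep A V X) (j : V) :
    Function.Injective (pathSum X j) := by
  intro v w hvw
  by_cases hj : IsSource j
  · funext a
    rw [a.eq_id hj]
    rwa [pathSum_of_isSource X hj, pathSum_of_isSource X hj] at hvw
  · rw [pathSum_eq_deltaMap X hj, pathSum_eq_deltaMap X hj] at hvw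
    funext a
    obtain ⟨⟨⟨l, α⟩, a⟩, rfl⟩ := (SourcePath.consEquiv j hj).surjective a
    exact congrFun (pathSum_injective hX l (congrFun (hX j hvw) ⟨l, α⟩)) a
termination_by pathHeight j
decreasing_by exact pathHeight_lt_of_arrow α

lemma mem_range_pathSum_of_deltaMap_mem {X : QRep A V} (hX : IsMonicRep A V X) {i : V}
    {x : ∀ b : Σ l : V, l ⟶ i, X.obj ((Paths.of V).obj b.1)}
    (hx : deltaMap A V X i x ∈ LinearMap.range (pathSum X i)) (b : Σ l : V, l ⟶ i) :
    x b ∈ LinearMap.range (pathSum X b.1) := by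
  have hi : ¬ IsSource i := fun hi => (hi b.1).elim b.2
  obtain ⟨u, hu⟩ := hx
  rw [pathSum_eq_deltaMap X hi] at hu
  exact ⟨_, congrFun (hX i hu) b⟩

section Coker
variable {W X : QRep A V} (η : W ⟶ X)

omit [Fintype V] [∀ i j : V, Fintype (i ⟶ j)] [∀ i j : V, Fintype (Quiver.Path i j)] in
lemma range_app_le_comap_range {j l : Paths V} (q : j ⟶ l) :
    LinearMap.range (η.app j).hom ≤ (LinearMap.range (η.app l).hom).comap (X.map q).hom := by
  rintro _ ⟨w, rfl⟩
  exact ⟨W.map q w, congrArg (fun f => f.hom w) (η.naturality q)⟩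

noncomputable def cokerRep : QRep A V where
  obj j := ModuleCat.of A (X.obj j ⧸ LinearMap.range (η.app j).hom)
  map q := ModuleCat.ofHom (Submodule.mapQ _ _ (X.map q).hom (range_app_le_comap_range η q))
  map_id j := by
    ext x
    simp
  map_comp q q' := by
    ext x
    simp

noncomputable def cokerProj : X ⟶ cokerRep η where
  app j := ModuleCat.ofHom (LinearMap.range (η.app j).hom).mkQ
  naturality j l q := by
    ext x
    rfl

omit [∀ i j : V, Fintype (Quiver.Path i j)] in
lemma isMonicRep_cokerRep
    (h : ∀ i x, deltaMap A V X i x ∈ LinearMap.range (η.app ((Paths.of V).obj i)).hom →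
      ∀ b, x b ∈ LinearMap.range (η.app ((Paths.of V).obj b.1)).hom) :
    IsMonicRep A V (cokerRep η) := by
  intro i
  rw [injective_iff_map_eq_zero]
  intro v hv
  choose x hx using fun b => Submodule.mkQ_surjective _ (v b)
  have hv' : v = fun b => (cokerProj η).app _ (x b) := funext fun b => (hx b).symm
  rw [hv', deltaMap_naturality] at hv
  have hmem := h i x ((Submodule.Quotient.mk_eq_zero _).1 hv)
  rw [hv']
  funext b
  exact (Submodule.Quotient.mk_eq_zero _).2 (hmem b)

end Coker

noncomputable abbrev sourceFamily (X : QRep A V) : SourceVertex V → QRep A V :=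
  fun s => mObj A V s.1 (X.obj ((Paths.of V).obj s.1))

noncomputable def sourceMap (X : QRep A V) : (⨁ sourceFamily X) ⟶ X :=
  biproduct.desc fun s => counitHom A V s.1 X

omit [Fintype V] [∀ i j : V, Fintype (i ⟶ j)] in
lemma counitHom_app_apply (i : V) (X : QRep A V) (j : V)
    (y : ((Paths.of V).obj i ⟶ (Paths.of V).obj j) →₀ X.obj ((Paths.of V).obj i)) :
    (counitHom A V i X).app ((Paths.of V).obj j) y =
      ∑ p : (Paths.of V).obj i ⟶ (Paths.of V).obj j, X.map p (y p) := by
  show Finsupp.lsum ℕ (fun p => (X.map p).hom) y = _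
  rw [Finsupp.lsum_apply, Finsupp.sum_fintype _ _ fun p => map_zero _]

noncomputable def sourceCoords (X : QRep A V) (j : V) :
    (⨁ sourceFamily X).obj ((Paths.of V).obj j) →ₗ[A]
      ∀ a : SourcePath j, X.obj ((Paths.of V).obj a.1.1) :=
  LinearMap.pi fun a => Finsupp.lapply a.2 ∘ₗ ((biproduct.π (sourceFamily X) a.1).app _).hom

omit [∀ i j : V, Fintype (i ⟶ j)] in
lemma sourceMap_app_apply (X : QRep A V) (j : V)
    (x : (⨁ sourceFamily X).obj ((Paths.of V).obj j)) :
    (sourceMap X).app _ x = pathSum X j (sourceCoords X j x) := by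
  rw [sourceMap, biproduct.desc_eq, NatTrans.app_sum]
  change ModuleCat.Hom.hom _ x = _
  rw [ModuleCat.hom_sum, LinearMap.sum_apply, pathSum_apply, Fintype.sum_sigma]
  exact Finset.sum_congr rfl fun s _ => counitHom_app_apply s.1 X j _

omit [∀ i j : V, Fintype (i ⟶ j)] [∀ i j : V, Fintype (Quiver.Path i j)] in
lemma sourceCoords_injective (X : QRep A V) (j : V) : Function.Injective (sourceCoords X j) := by
  rw [← LinearMap.ker_eq_bot, LinearMap.ker_eq_bot']
  intro x hx
  rw [biproduct_app_eq_sum _ _ x]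
  refine Finset.sum_eq_zero fun s _ => ?_
  have hs : (biproduct.π (sourceFamily X) s).app ((Paths.of V).obj j) x = 0 :=
    Finsupp.ext fun p => congrFun hx ⟨s, p⟩
  rw [hs, map_zero]

omit [∀ i j : V, Fintype (i ⟶ j)] [∀ i j : V, Fintype (Quiver.Path i j)] in
lemma sourceMap_app_ι_single (X : QRep A V) (s : SourceVertex V) {j : V}
    (p : (Paths.of V).obj s.1 ⟶ (Paths.of V).obj j) (x : X.obj ((Paths.of V).obj s.1)) :
    (sourceMap X).app _ ((biproduct.ι (sourceFamily X) s).app _ (Finsupp.single p x)) =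
      X.map p x := by
  have h : (biproduct.ι (sourceFamily X) s).app _ ≫ (sourceMap X).app _ =
      (counitHom A V s.1 X).app ((Paths.of V).obj j) := by
    rw [← NatTrans.comp_app, sourceMap, biproduct.ι_desc]
  exact (congrArg (fun f => f.hom (Finsupp.single p x)) h).trans (Finsupp.lsum_single _ _ _ _)

lemma sourceMap_app_injective {X : QRep A V} (hX : IsMonicRep A V X) (j : V) :
    Function.Injective ((sourceMap X).app ((Paths.of V).obj j)) := by
  have h : ⇑((sourceMap X).app ((Paths.of V).obj j)) = pathSum X j ∘ sourceCoords X j :=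
    funext (sourceMap_app_apply X j)
  rw [h]
  exact (pathSum_injective hX j).comp (sourceCoords_injective X j)

omit [∀ i j : V, Fintype (i ⟶ j)] in
lemma range_sourceMap_app (X : QRep A V) (j : V) :
    LinearMap.range ((sourceMap X).app ((Paths.of V).obj j)).hom =
      LinearMap.range (pathSum X j) := by
  refine le_antisymm ?_ ?_
  · rintro _ ⟨x, rfl⟩
    exact ⟨_, (sourceMap_app_apply X j x).symm⟩
  · rintro _ ⟨v, rfl⟩
    rw [pathSum_apply]
    exact Submodule.sum_mem _ fun a _ =>
      ⟨(biproduct.ι (sourceFamily X) a.1).app _ (Finsupp.single a.2 (v a)),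
        sourceMap_app_ι_single X a.1 a.2 (v a)⟩

end

theorem source_exact_sequence
    (X : QRep A V) (hX : IsMonicRep A V X) :
    ∀ φ : (⨁ fun s : {i : V // ∀ j : V, IsEmpty (j ⟶ i)} =>
            mObj A V s.1 (X.obj ((Paths.of V).obj s.1))) ⟶ X,
      φ = biproduct.desc (fun s : {i : V // ∀ j : V, IsEmpty (j ⟶ i)} => counitHom A V s.1 X) →
      ∃ (Z : QRep A V) (ψ : X ⟶ Z),
        (∀ j : Paths V, Function.Injective (φ.app j)) ∧
        (∀ j : Paths V, Function.Exact (φ.app j) (ψ.app j)) ∧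
        (∀ j : Paths V, Function.Surjective (ψ.app j)) ∧
        IsMonicRep A V Z ∧
        ∀ i : V, (∀ j : V, IsEmpty (j ⟶ i)) → Subsingleton (Z.obj ((Paths.of V).obj i)) := by
  rintro φ rfl
  refine ⟨cokerRep (sourceMap X), cokerProj (sourceMap X), fun j => sourceMap_app_injective hX j,
    fun j => LinearMap.exact_iff.mpr (Submodule.ker_mkQ _), fun j => Submodule.mkQ_surjective _,
    ?_, fun i hi => ?_⟩
  · refine isMonicRep_cokerRep _ fun i x hx b => ?_
    rw [range_sourceMap_app] at hx ⊢
    exact mem_range_pathSum_of_deltaMap_mem hX hx b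
  · rw [cokerRep, Submodule.Quotient.subsingleton_iff, range_sourceMap_app, LinearMap.range_eq_top]
    exact pathSum_surjective_of_isSource X hi
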